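/- For positive definite matrices X, A and t ≥ 0, ‖log(X #_t A)‖ ≤ (1 + t)‖log X‖ + t‖log A‖, where ‖·‖ is the operator norm. -/

import Mathlib

open MeasureTheory
open scoped ComplexOrder

abbrev Mat (m : ℕ) := Matrix (Fin m) (Fin m) ℂ

noncomputable instance {m : ℕ} : MeasurableSpace (Mat m) := borel _
instance {m : ℕ} : BorelSpace (Mat m) := ⟨rfl⟩

/-- Functional calculus on Hermitian matrices (junk value `A` otherwise). -/
noncomputable def matFun {m : ℕ} (f : ℝ → ℝ) (A : Mat m) : Mat m :=
  if h : A.IsHermitian then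
    (h.eigenvectorUnitary : Mat m) *
      Matrix.diagonal (fun i => (f (h.eigenvalues i) : ℂ)) *
      star (h.eigenvectorUnitary : Mat m)
  else A

/-- Real power `A^t` of a positive definite matrix, via the spectral decomposition. -/
noncomputable def mpow {m : ℕ} (A : Mat m) (t : ℝ) : Mat m := matFun (fun x => x ^ t) A

/-- Logarithm of a positive definite matrix, via the spectral decomposition. -/
noncomputable def mlog {m : ℕ} (A : Mat m) : Mat m := matFun Real.log A

/-- The operator norm of a matrix (acting on the Euclidean space). -/
noncomputable def opN {m : ℕ} (A : Mat m) : ℝ :=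
  ‖(Matrix.toEuclideanCLM (𝕜 := ℂ) A : EuclideanSpace ℂ (Fin m) →L[ℂ] EuclideanSpace ℂ (Fin m))‖

/-- The Frobenius (Hilbert-Schmidt) norm of a matrix. -/
noncomputable def fnorm {m : ℕ} (A : Mat m) : ℝ :=
  Real.sqrt (∑ i, ∑ j, ‖A i j‖ ^ 2)

/-- The Riemannian trace metric distance `d(A,B) = ‖log (A^{-1/2} B A^{-1/2})‖₂`. -/
noncomputable def rdist {m : ℕ} (A B : Mat m) : ℝ :=
  fnorm (mlog (mpow A (-(1/2 : ℝ)) * B * mpow A (-(1/2 : ℝ))))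

/-- The `t`-weighted geometric mean `X #_t A = X^{1/2} (X^{-1/2} A X^{-1/2})^t X^{1/2}`. -/
noncomputable def geom {m : ℕ} (X : Mat m) (t : ℝ) (A : Mat m) : Mat m :=
  mpow X (1/2 : ℝ) * mpow (mpow X (-(1/2 : ℝ)) * A * mpow X (-(1/2 : ℝ))) t * mpow X (1/2 : ℝ)

/-- Finite first moment for a measure on positive definite matrices. -/
def HasFFM {m : ℕ} (μ : Measure (Mat m)) : Prop :=
  ∃ Y : Mat m, Y.PosDef ∧ Integrable (fun A => rdist A Y) μ

/-- Couplings of two probability measures. -/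
def couplings {m : ℕ} (μ ν : Measure (Mat m)) : Set (Measure (Mat m × Mat m)) :=
  {π | IsProbabilityMeasure π ∧ π.map Prod.fst = μ ∧ π.map Prod.snd = ν}

/-- The 1-Wasserstein distance with respect to the Riemannian trace metric. -/
noncomputable def W1 {m : ℕ} (μ ν : Measure (Mat m)) : ℝ :=
  sInf ((fun π : Measure (Mat m × Mat m) => ∫ p, rdist p.1 p.2 ∂π) '' couplings μ ν)

/-! A positive invertible `g` with `‖g‖ ≤ eᶜ` and `‖g⁻¹‖ ≤ eᶜ` has its spectrum in `[e⁻ᶜ, eᶜ]`,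
hence `‖log g‖ ≤ c`; conversely `‖gˢ‖ ≤ e^{|s| ‖log g‖}`. Such two-sided bounds multiply along
products. Write `X #_t A = X^{1/2} M^t X^{1/2}` with `M = X^{-1/2} A X^{-1/2}`, whose inverse is
`X^{1/2} A⁻¹ X^{1/2}`: first `‖log M‖ ≤ ‖log X‖ + ‖log A‖`, then
`‖log (X #_t A)‖ ≤ ‖log X‖ / 2 + t ‖log M‖ + ‖log X‖ / 2`. The argument works in any unital
C⋆-algebra, and on Hermitian matrices `matFun` is the continuous functional calculus. -/

open CFC

section
variable {A : Type*} [CStarAlgebra A]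

def NormExpBounded (c : ℝ) (u : Aˣ) : Prop :=
  ‖(u : A)‖ ≤ Real.exp c ∧ ‖(↑u⁻¹ : A)‖ ≤ Real.exp c

namespace NormExpBounded

variable {u v : Aˣ} {α β : ℝ}

lemma inv (hu : NormExpBounded α u) : NormExpBounded α u⁻¹ := by
  simpa [NormExpBounded, and_comm] using hu

lemma mono (hu : NormExpBounded α u) (hαβ : α ≤ β) : NormExpBounded β u :=
  ⟨hu.1.trans (Real.exp_le_exp.2 hαβ), hu.2.trans (Real.exp_le_exp.2 hαβ)⟩

lemma mul (hu : NormExpBounded α u) (hv : NormExpBounded β v) :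
    NormExpBounded (α + β) (u * v) := by
  refine ⟨?_, ?_⟩
  · calc ‖((u * v : Aˣ) : A)‖ ≤ ‖(u : A)‖ * ‖(v : A)‖ := by simpa using norm_mul_le _ _
      _ ≤ Real.exp α * Real.exp β := by gcongr; exacts [hu.1, hv.1]
      _ = Real.exp (α + β) := (Real.exp_add α β).symm
  · calc ‖(↑(u * v)⁻¹ : A)‖ ≤ ‖(↑v⁻¹ : A)‖ * ‖(↑u⁻¹ : A)‖ := by simpa using norm_mul_le _ _
      _ ≤ Real.exp β * Real.exp α := by gcongr; exacts [hv.2, hu.2]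
      _ = Real.exp (α + β) := by rw [← Real.exp_add, add_comm]

lemma abs_log_le_of_mem_spectrum (hu : NormExpBounded α u) {x : ℝ}
    (hx : x ∈ spectrum ℝ (u : A)) : |Real.log x| ≤ α := by
  obtain _ | _ := subsingleton_or_nontrivial A
  · simp [spectrum.of_subsingleton] at hx
  have hx0 : x ≠ 0 := by
    rintro rfl
    exact spectrum.zero_notMem ℝ u.isUnit hx
  have hxinv : x⁻¹ ∈ spectrum ℝ (↑u⁻¹ : A) :=
    spectrum.inv_mem_iff (r := Units.mk0 x hx0) |>.1 hx
  have hle : |x| ≤ Real.exp α := (spectrum.norm_le_norm_of_mem hx).trans hu.1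
  have hinv_le : |x|⁻¹ ≤ Real.exp α := by
    simpa using (spectrum.norm_le_norm_of_mem hxinv).trans hu.2
  have hpos : 0 < |x| := abs_pos.2 hx0
  rw [← Real.log_abs, abs_le, Real.le_log_iff_exp_le hpos, Real.log_le_iff_le_exp hpos,
    Real.exp_neg]
  exact ⟨inv_le_of_inv_le₀ hpos hinv_le, hle⟩

lemma norm_log_le (hu : NormExpBounded α u) (hα : 0 ≤ α) : ‖log (u : A)‖ ≤ α :=
  norm_cfc_le hα fun _ hx => hu.abs_log_le_of_mem_spectrum hx

end NormExpBounded

end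

section
variable {A : Type*} [CStarAlgebra A] [PartialOrder A] [StarOrderedRing A]

lemma norm_rpow_le {a : A} (ha : IsStrictlyPositive a) (s : ℝ) :
    ‖a ^ s‖ ≤ Real.exp (|s| * ‖log a‖) := by
  have hcont : ContinuousOn Real.log (spectrum ℝ a) :=
    Real.continuousOn_log.mono fun y hy (h : y = 0) => spectrum.zero_notMem ℝ ha.isUnit (h ▸ hy)
  rw [rpow_eq_cfc_real ha.nonneg]
  refine norm_cfc_le (Real.exp_nonneg _) fun x hx => ?_
  have hx0 : 0 < x := (StarOrderedRing.isStrictlyPositive_iff_spectrum_pos a).1 ha x hx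
  rw [Real.norm_of_nonneg (Real.rpow_nonneg hx0.le s), Real.rpow_def_of_pos hx0, Real.exp_le_exp]
  calc Real.log x * s ≤ |s| * ‖Real.log x‖ := by
        rw [mul_comm, Real.norm_eq_abs, ← abs_mul]; exact le_abs_self _
    _ ≤ |s| * ‖log a‖ := by gcongr; exact norm_apply_le_norm_cfc Real.log a hx hcont

lemma normExpBounded_cfcRpow (a : Aˣ) (ha : 0 ≤ (a : A)) (s : ℝ) :
    NormExpBounded (|s| * ‖log (a : A)‖) (a.cfcRpow s ha) := by
  have hpos : IsStrictlyPositive (a : A) := a.isStrictlyPositive_iff.2 ha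
  refine ⟨norm_rpow_le hpos s, ?_⟩
  simpa using norm_rpow_le hpos (-s)

theorem norm_log_geom_le {x a : A} (hx : IsStrictlyPositive x) (ha : IsStrictlyPositive a)
    {t : ℝ} (ht : 0 ≤ t) :
    ‖log (x ^ (1/2 : ℝ) * (x ^ (-(1/2 : ℝ)) * a * x ^ (-(1/2 : ℝ))) ^ t * x ^ (1/2 : ℝ))‖ ≤
      (1 + t) * ‖log x‖ + t * ‖log a‖ := by
  lift x to Aˣ using hx.isUnit
  lift a to Aˣ using ha.isUnit
  set p := x.cfcRpow (1/2) hx.nonneg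
  have hp : NormExpBounded (‖log (x : A)‖ / 2) p := by
    convert normExpBounded_cfcRpow x hx.nonneg (1/2) using 1
    rw [abs_of_pos one_half_pos]
    ring
  have ha' : NormExpBounded ‖log (a : A)‖ a := by
    have ha_rpow_one : a.cfcRpow 1 ha.nonneg = a := Units.ext (rpow_one _)
    simpa [ha_rpow_one] using normExpBounded_cfcRpow a ha.nonneg 1
  set M := p⁻¹ * a * p⁻¹
  have hMpos : IsStrictlyPositive (M : A) := by
    have hp_inv : IsSelfAdjoint (↑p⁻¹ : A) := by
      simpa [p] using (rpow_nonneg (a := (x : A))).isSelfAdjoint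
    simpa [M] using ha.conjugate_of_isUnit_of_isSelfAdjoint _ _ (Units.isUnit _) hp_inv
  have hM : ‖log (M : A)‖ ≤ ‖log (x : A)‖ + ‖log (a : A)‖ := by
    refine ((hp.inv.mul ha').mul hp.inv).norm_log_le (by positivity) |>.trans_eq ?_
    ring
  have hG := (hp.mul ((normExpBounded_cfcRpow M hMpos.nonneg t).mono
    (mul_le_mul_of_nonneg_left hM (abs_nonneg t)))).mul hp
  have hG_val : ((p * M.cfcRpow t hMpos.nonneg * p : Aˣ) : A) =
      (x : A) ^ (1/2 : ℝ) * ((x : A) ^ (-(1/2 : ℝ)) * a * (x : A) ^ (-(1/2 : ℝ))) ^ t *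
        (x : A) ^ (1/2 : ℝ) := by
    simp [p, M]
  rw [← hG_val]
  refine (hG.norm_log_le (by positivity)).trans_eq ?_
  rw [abs_of_nonneg ht]
  ring

end

open scoped Matrix.Norms.L2Operator MatrixOrder

section
variable {m : ℕ}

lemma matFun_eq_cfc {A : Mat m} (hA : A.IsHermitian) (f : ℝ → ℝ) : matFun f A = cfc f A := by
  rw [matFun, dif_pos hA, hA.cfc_eq, Matrix.IsHermitian.cfc, Unitary.conjStarAlgAut_apply]
  rfl

lemma mpow_eq_rpow {A : Mat m} (hA : 0 ≤ A) (s : ℝ) : mpow A s = A ^ s := by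
  rw [mpow, matFun_eq_cfc hA.isSelfAdjoint, rpow_eq_cfc_real hA]

lemma mlog_eq_log {A : Mat m} (hA : A.IsHermitian) : mlog A = log A :=
  matFun_eq_cfc hA Real.log

lemma opN_eq_norm (A : Mat m) : opN A = ‖A‖ := rfl

lemma geom_eq_rpow {X A : Mat m} (hX : 0 ≤ X) (hA : 0 ≤ A) (t : ℝ) :
    geom X t A =
      X ^ (1/2 : ℝ) * (X ^ (-(1/2 : ℝ)) * A * X ^ (-(1/2 : ℝ))) ^ t * X ^ (1/2 : ℝ) := by
  have hM : 0 ≤ X ^ (-(1/2 : ℝ)) * A * X ^ (-(1/2 : ℝ)) :=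
    IsSelfAdjoint.conjugate_nonneg hA rpow_nonneg.isSelfAdjoint
  rw [geom, mpow_eq_rpow hX, mpow_eq_rpow hX, mpow_eq_rpow hM]

end

/-- `‖log (X #_t A)‖ ≤ (1+t)‖log X‖ + t‖log A‖` for positive definite `X, A` and `t ≥ 0`. -/
theorem stmt3 {m : ℕ} (X A : Mat m) (hX : X.PosDef) (hA : A.PosDef) (t : ℝ) (ht : 0 ≤ t) :
    opN (mlog (geom X t A)) ≤ (1 + t) * opN (mlog X) + t * opN (mlog A) := by
  have hX' := hX.isStrictlyPositive
  have hA' := hA.isStrictlyPositive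
  have hgeom := geom_eq_rpow hX'.nonneg hA'.nonneg t
  have hG : 0 ≤ geom X t A :=
    hgeom ▸ IsSelfAdjoint.conjugate_nonneg rpow_nonneg rpow_nonneg.isSelfAdjoint
  rw [opN_eq_norm, opN_eq_norm, opN_eq_norm, mlog_eq_log hG.isSelfAdjoint, mlog_eq_log hX.1,
    mlog_eq_log hA.1, hgeom]
  exact norm_log_geom_le hX' hA' ht
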